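/- arXiv:1109.4777 — 2 statements merged into one kernel-verified Lean document; each statement's English description precedes it below -/
import Mathlib

section
/- If U1 and U2 are independent beta random variables with parameters (a1,b1) and (a2,b2) respectively, and a2 = a1 + b1, then the product U1·U2 is a beta random variable with parameters (a1, b1 + b2). -/
open MeasureTheory ProbabilityTheory Real Filter

/-- The density of a Beta(a,b) random variable on (0,1). -/
noncomputable def betaPDFReal (a b x : ℝ) : ℝ :=
  if 0 < x ∧ x < 1 then
    (Real.Gamma (a + b) / (Real.Gamma a * Real.Gamma b)) * x ^ (a - 1) * (1 - x) ^ (b - 1)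
  else 0

/-- The Beta(a,b) probability measure on ℝ. -/
noncomputable def betaMeasure (a b : ℝ) : Measure ℝ :=
  MeasureTheory.volume.withDensity (fun x => ENNReal.ofReal (_root_.betaPDFReal a b x))

/-- `X` is a beta random variable with parameters `(a, b)` on `(Ω, μ)`. -/
def HasBetaLaw {Ω : Type*} [MeasurableSpace Ω] (μ : Measure Ω) (X : Ω → ℝ) (a b : ℝ) : Prop :=
  Measurable X ∧ μ.map X = _root_.betaMeasure a b


open scoped ENNReal

/-! Integrating over the second factor, `U1 * U2` has density
`z ↦ ∫ f_{a1+b1,b2}(y) f_{a1,b1}(z/y) dy/y`. Because `a2 = a1 + b1` the powers of `y` cancel: for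
`0 < z < 1` the integrand is a constant times `z^(a1-1) (y-z)^(b1-1) (1-y)^(b2-1)` on `z < y < 1`.
The affine substitution `y = z + (1-z) t` turns its integral into
`z^(a1-1) (1-z)^(b1+b2-1) B(b1,b2)`, and `B(a1,b1) B(a1+b1,b2) = B(a1,b1+b2) B(b1,b2)` fixes
the normalising constant. -/

lemma betaMeasure_eq_withDensity_betaPDF (a b : ℝ) :
    _root_.betaMeasure a b = volume.withDensity (betaPDF a b) := by
  rw [_root_.betaMeasure]
  congr 1 with x
  rw [betaPDF, ProbabilityTheory.betaPDFReal, _root_.betaPDFReal, beta, one_div_div]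

lemma ProbabilityTheory.beta_mul_beta_add {a b c : ℝ} (ha : 0 < a) (hb : 0 < b) (hc : 0 < c) :
    beta a b * beta (a + b) c = beta a (b + c) * beta b c := by
  have := (Gamma_pos_of_pos (add_pos ha hb)).ne'
  have := (Gamma_pos_of_pos (add_pos hb hc)).ne'
  have := (Gamma_pos_of_pos (add_pos (add_pos ha hb) hc)).ne'
  simp only [beta, ← add_assoc]
  field_simp

lemma lintegral_Ioo_rpow_mul_one_sub_rpow {p q : ℝ} (hp : 0 < p) (hq : 0 < q) :
    ∫⁻ t in Set.Ioo 0 1, ENNReal.ofReal (t ^ (p - 1) * (1 - t) ^ (q - 1)) =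
      ENNReal.ofReal (beta p q) := by
  have hB := beta_pos hp hq
  have h := lintegral_betaPDF_eq_one hp hq
  simp_rw [lintegral_betaPDF, mul_assoc, ENNReal.ofReal_mul (one_div_pos.2 hB).le] at h
  rw [lintegral_const_mul' _ _ ENNReal.ofReal_ne_top, mul_comm] at h
  rw [ENNReal.eq_inv_of_mul_eq_one_left h, ← ENNReal.ofReal_inv_of_pos (one_div_pos.2 hB),
    one_div, inv_inv]

lemma lintegral_Ioo_sub_rpow_mul_sub_rpow {c d p q : ℝ} (hcd : c < d) (hp : 0 < p)
    (hq : 0 < q) :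
    ∫⁻ y in Set.Ioo c d, ENNReal.ofReal ((y - c) ^ (p - 1) * (d - y) ^ (q - 1)) =
      ENNReal.ofReal ((d - c) ^ (p + q - 1) * beta p q) := by
  have hdc : 0 < d - c := sub_pos.2 hcd
  have himage : (fun t => (d - c) * t + c) '' Set.Ioo 0 1 = Set.Ioo c d := by
    rw [Set.image_affine_Ioo hdc]; ring_nf
  have hderiv : ∀ t ∈ Set.Ioo (0 : ℝ) 1,
      HasDerivWithinAt (fun t => (d - c) * t + c) (d - c) (Set.Ioo 0 1) t := fun t _ =>
    (((hasDerivAt_id t).const_mul (d - c)).add_const c).hasDerivWithinAt.congr_deriv (mul_one _)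
  have hinj : Set.InjOn (fun t => (d - c) * t + c) (Set.Ioo 0 1) := fun s _ t _ hst =>
    mul_left_cancel₀ hdc.ne' (add_right_cancel hst)
  have hpt : ∀ t ∈ Set.Ioo (0 : ℝ) 1,
      ENNReal.ofReal |d - c| *
          ENNReal.ofReal (((d - c) * t + c - c) ^ (p - 1) * (d - ((d - c) * t + c)) ^ (q - 1)) =
        ENNReal.ofReal ((d - c) ^ (p + q - 1)) *
          ENNReal.ofReal (t ^ (p - 1) * (1 - t) ^ (q - 1)) := by
    rintro t ⟨ht0, ht1⟩
    have h1t : 0 < 1 - t := sub_pos.2 ht1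
    rw [abs_of_pos hdc, ← ENNReal.ofReal_mul hdc.le, ← ENNReal.ofReal_mul (by positivity)]
    congr 1
    rw [add_sub_cancel_right, show d - ((d - c) * t + c) = (d - c) * (1 - t) by ring,
      mul_rpow hdc.le ht0.le, mul_rpow hdc.le h1t.le,
      show p + q - 1 = (p - 1) + (q - 1) + 1 by ring, rpow_add hdc, rpow_add hdc, rpow_one]
    ring
  rw [← himage, lintegral_image_eq_lintegral_abs_deriv_mul measurableSet_Ioo hderiv hinj,
    setLIntegral_congr_fun measurableSet_Ioo hpt, lintegral_const_mul' _ _ ENNReal.ofReal_ne_top,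
    lintegral_Ioo_rpow_mul_one_sub_rpow hp hq, ← ENNReal.ofReal_mul (by positivity)]

lemma Real.lintegral_comp_mul_left {x : ℝ} (hx : x ≠ 0) (F : ℝ → ℝ≥0∞) :
    ∫⁻ y, F (x * y) = ENNReal.ofReal |x⁻¹| * ∫⁻ z, F z :=
  calc ∫⁻ y, F (x * y) = ∫⁻ z, F z ∂(volume.map (x * ·)) :=
        (lintegral_map_equiv F (MeasurableEquiv.mulLeft₀ x hx)).symm
    _ = ENNReal.ofReal |x⁻¹| * ∫⁻ z, F z := by
        rw [Real.map_volume_mul_left hx, lintegral_smul_measure, smul_eq_mul]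

lemma Real.withDensity_mconv_withDensity {f g : ℝ → ℝ≥0∞} (hf : Measurable f)
    (hg : Measurable g) :
    volume.withDensity f ∗ₘ volume.withDensity g =
      volume.withDensity (fun z => ∫⁻ x, f x * ENNReal.ofReal |x⁻¹| * g (z / x)) := by
  ext s hs
  set χ : ℝ → ℝ≥0∞ := s.indicator 1
  have hχ : Measurable χ := measurable_one.indicator hs
  have hinner : ∀ x ≠ 0, ∫⁻ y, g y * χ (x * y) =
      ENNReal.ofReal |x⁻¹| * ∫⁻ z, g (z / x) * χ z := fun x hx => by
    rw [← Real.lintegral_comp_mul_left hx]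
    simp_rw [mul_div_cancel_left₀ _ hx]
  calc (volume.withDensity f ∗ₘ volume.withDensity g) s
      = ∫⁻ x, ∫⁻ y, χ (x * y) ∂volume.withDensity g ∂volume.withDensity f := by
        rw [← lintegral_indicator_one hs, Measure.lintegral_mconv hχ]
    _ = ∫⁻ x, f x * ∫⁻ y, g y * χ (x * y) := by
        have hg_int : ∀ x, ∫⁻ y, χ (x * y) ∂volume.withDensity g = ∫⁻ y, g y * χ (x * y) :=
          fun x => lintegral_withDensity_eq_lintegral_mul _ hg (hχ.comp (measurable_const_mul x))
        simp_rw [hg_int]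
        exact lintegral_withDensity_eq_lintegral_mul _ hf
          (Measurable.lintegral_prod_right ((hg.comp measurable_snd).mul (hχ.comp measurable_mul)))
    _ = ∫⁻ x, ∫⁻ z, f x * ENNReal.ofReal |x⁻¹| * g (z / x) * χ z := by
        refine lintegral_congr_ae ((Measure.ae_ne volume 0).mono fun x (hx : x ≠ 0) => ?_)
        dsimp only
        rw [hinner x hx, ← mul_assoc, ← lintegral_const_mul _ (by fun_prop)]
        simp_rw [mul_assoc]
    _ = ∫⁻ z, (∫⁻ x, f x * ENNReal.ofReal |x⁻¹| * g (z / x)) * χ z := by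
        rw [lintegral_lintegral_swap (by fun_prop)]
        exact lintegral_congr fun z => lintegral_mul_const _ (by fun_prop)
    _ = _ := by
        rw [← lintegral_indicator_one hs,
          lintegral_withDensity_eq_lintegral_mul _ (by fun_prop) hχ]
        rfl

lemma ProbabilityTheory.measurable_betaPDF (a b : ℝ) : Measurable (betaPDF a b) :=
  (measurable_betaPDFReal a b).ennreal_ofReal

lemma ProbabilityTheory.mem_Ioo_of_betaPDF_ne_zero {a b x : ℝ} (h : betaPDF a b x ≠ 0) :
    x ∈ Set.Ioo 0 1 := by
  by_contra hx
  exact h (by rw [betaPDF_eq, if_neg (show ¬(0 < x ∧ x < 1) from hx), ENNReal.ofReal_zero])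

lemma ProbabilityTheory.lintegral_betaPDF_mul_betaPDF_div {a b c : ℝ} (ha : 0 < a) (hb : 0 < b)
    (hc : 0 < c) (z : ℝ) :
    ∫⁻ y, betaPDF (a + b) c y * ENNReal.ofReal |y⁻¹| * betaPDF a b (z / y) =
      betaPDF a (b + c) z := by
  set F : ℝ → ℝ≥0∞ := fun y => betaPDF (a + b) c y * ENNReal.ofReal |y⁻¹| * betaPDF a b (z / y)
  have hsupp : ∀ y, F y ≠ 0 → 0 < z ∧ z < y ∧ y < 1 := fun y hy => by
    obtain ⟨hy0, hy1⟩ := mem_Ioo_of_betaPDF_ne_zero (left_ne_zero_of_mul (left_ne_zero_of_mul hy))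
    obtain ⟨hzy0, hzy1⟩ := mem_Ioo_of_betaPDF_ne_zero (right_ne_zero_of_mul hy)
    rw [lt_div_iff₀ hy0, zero_mul] at hzy0
    rw [div_lt_one hy0] at hzy1
    exact ⟨hzy0, hzy1, hy1⟩
  by_cases hz : 0 < z ∧ z < 1
  case neg =>
    have hF : F = 0 := funext fun y => by_contra fun hy =>
      hz ⟨(hsupp y hy).1, (hsupp y hy).2.1.trans (hsupp y hy).2.2⟩
    rw [hF, Pi.zero_def, lintegral_zero, betaPDF_eq, if_neg hz, ENNReal.ofReal_zero]
  case pos =>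
    obtain ⟨hz0, hz1⟩ := hz
    have hB1 := beta_pos (add_pos ha hb) hc
    have hB2 := beta_pos ha hb
    have hF : ∀ y ∈ Set.Ioo z 1,
        F y = ENNReal.ofReal (z ^ (a - 1) / (beta (a + b) c * beta a b)) *
          ENNReal.ofReal ((y - z) ^ (b - 1) * (1 - y) ^ (c - 1)) := by
      rintro y ⟨hzy, hy1⟩
      have hy0 : 0 < y := hz0.trans hzy
      have hyz : 0 < y - z := sub_pos.2 hzy
      simp only [F]
      rw [betaPDF_of_pos_lt_one hy0 hy1, betaPDF_of_pos_lt_one (div_pos hz0 hy0)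
        ((div_lt_one hy0).2 hzy), abs_of_pos (inv_pos.2 hy0), ← ENNReal.ofReal_mul (by positivity),
        ← ENNReal.ofReal_mul (by positivity), ← ENNReal.ofReal_mul (by positivity)]
      congr 1
      rw [one_sub_div hy0.ne', div_rpow hz0.le hy0.le, div_rpow hyz.le hy0.le,
        show a + b - 1 = (a - 1) + (b - 1) + 1 by ring, rpow_add hy0, rpow_add hy0, rpow_one]
      have : 0 < y ^ (a - 1) := rpow_pos_of_pos hy0 _
      have : 0 < y ^ (b - 1) := rpow_pos_of_pos hy0 _
      field_simp
    have hsub : Function.support F ⊆ Set.Ioo z 1 := fun y hy =>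
      ⟨(hsupp y hy).2.1, (hsupp y hy).2.2⟩
    rw [← setLIntegral_eq_of_support_subset hsub, setLIntegral_congr_fun measurableSet_Ioo hF,
      lintegral_const_mul' _ _ ENNReal.ofReal_ne_top,
      lintegral_Ioo_sub_rpow_mul_sub_rpow hz1 hb hc, ← ENNReal.ofReal_mul (by positivity),
      betaPDF_of_pos_lt_one hz0 hz1]
    congr 1
    field_simp
    rw [eq_div_iff (beta_pos ha (add_pos hb hc)).ne', mul_comm (beta (a + b) c),
      beta_mul_beta_add ha hb hc]
    ring

theorem beta_product_rule {Ω : Type*} [MeasurableSpace Ω] (μ : Measure Ω) [IsProbabilityMeasure μ]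
    (U1 U2 : Ω → ℝ) (a1 b1 a2 b2 : ℝ) (ha1 : 0 < a1) (hb1 : 0 < b1) (hb2 : 0 < b2)
    (h1 : HasBetaLaw μ U1 a1 b1) (h2 : HasBetaLaw μ U2 a2 b2)
    (hind : IndepFun U1 U2 μ) (hchain : a2 = a1 + b1) :
    HasBetaLaw μ (fun ω => U1 ω * U2 ω) a1 (b1 + b2) := by
  obtain ⟨hU1, hlaw1⟩ := h1
  obtain ⟨hU2, hlaw2⟩ := h2
  refine ⟨hU1.mul hU2, ?_⟩
  calc μ.map (fun ω => U1 ω * U2 ω)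
      = μ.map U2 ∗ₘ μ.map U1 := by
        rw [← hind.symm.map_mul_eq_map_mconv_map hU2 hU1]
        simp_rw [Pi.mul_def, mul_comm]
    _ = volume.withDensity (betaPDF (a1 + b1) b2) ∗ₘ volume.withDensity (betaPDF a1 b1) := by
        rw [hlaw1, hlaw2, hchain, betaMeasure_eq_withDensity_betaPDF,
          betaMeasure_eq_withDensity_betaPDF]
    _ = volume.withDensity (betaPDF a1 (b1 + b2)) := by
        rw [Real.withDensity_mconv_withDensity (measurable_betaPDF _ _) (measurable_betaPDF _ _)]
        simp_rw [lintegral_betaPDF_mul_betaPDF_div ha1 hb1 hb2]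
    _ = _root_.betaMeasure a1 (b1 + b2) := (betaMeasure_eq_withDensity_betaPDF _ _).symm
end

section
/- If U1,...,Up are independent beta random variables with parameters (a_i,b_i) satisfying a_{i+1} = a_i + b_i for i=1,...,p-1, then the product U1·U2···Up is a beta random variable with parameters (a_1, b_1 + b_2 + ... + b_p). -/
/-!
The `n`-th moment of Beta(a, b) is `B(a + n, b) / B(a, b) = g(a + b) / g(a)` with
`g t = Γ(t) / Γ(t + n)`. Independence makes the moments of `∏ Uᵢ` the product of these ratios,
and the chain condition `aᵢ₊₁ = aᵢ + bᵢ` makes that product telescope to `g(a₁ + ∑ bᵢ) / g(a₁)`,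
the `n`-th moment of Beta(a₁, ∑ bᵢ). Both laws are carried by `[0, 1]`, where a finite measure is
determined by its moments because polynomials are dense in `C([0, 1])` (Weierstrass).
-/

open MeasureTheory ProbabilityTheory Real Filter

theorem ContinuousMap.continuous_integral {X : Type*} [TopologicalSpace X] [CompactSpace X]
    [MeasurableSpace X] [BorelSpace X] (μ : Measure X) [IsFiniteMeasure μ] :
    Continuous fun g : C(X, ℝ) => ∫ x, g x ∂μ := by
  have h : (fun g : C(X, ℝ) => ∫ x, g x ∂μ) = fun g => ∫ x, toLp 1 μ ℝ g x ∂μ :=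
    funext fun g => (integral_congr_ae (coeFn_toLp μ g)).symm
  rw [h]
  exact MeasureTheory.continuous_integral.comp (toLp 1 μ ℝ).continuous

section Moments

variable {a b : ℝ} {μ ν : Measure (Set.Icc a b)} [IsFiniteMeasure μ] [IsFiniteMeasure ν]

theorem integral_eval_eq_of_forall_integral_pow_eq
    (h : ∀ n : ℕ, ∫ x, (x : ℝ) ^ n ∂μ = ∫ x, (x : ℝ) ^ n ∂ν) (q : Polynomial ℝ) :
    ∫ x, q.eval (x : ℝ) ∂μ = ∫ x, q.eval (x : ℝ) ∂ν := by
  have hint (κ : Measure (Set.Icc a b)) [IsFiniteMeasure κ] (q : Polynomial ℝ) :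
      Integrable (fun x : Set.Icc a b => q.eval (x : ℝ)) κ :=
    (q.continuous.comp continuous_subtype_val).integrable_of_hasCompactSupport
      (HasCompactSupport.of_compactSpace _)
  induction q using Polynomial.induction_on' with
  | add q r hq hr =>
    simp only [Polynomial.eval_add]
    rw [integral_add (hint μ q) (hint μ r), integral_add (hint ν q) (hint ν r), hq, hr]
  | monomial n c =>
    simp only [Polynomial.eval_monomial]
    rw [integral_const_mul, integral_const_mul, h]

theorem MeasureTheory.Measure.ext_of_forall_integral_pow_eq_Icc
    (h : ∀ n : ℕ, ∫ x, (x : ℝ) ^ n ∂μ = ∫ x, (x : ℝ) ^ n ∂ν) : μ = ν := by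
  refine ext_of_forall_integral_eq_of_IsFiniteMeasure fun f => ?_
  let S : Set C(Set.Icc a b, ℝ) := {g | ∫ x, g x ∂μ = ∫ x, g x ∂ν}
  have hclosed : IsClosed S :=
    isClosed_eq (ContinuousMap.continuous_integral μ) (ContinuousMap.continuous_integral ν)
  have hpoly : (polynomialFunctions (Set.Icc a b) : Set C(Set.Icc a b, ℝ)) ⊆ S := by
    rintro _ ⟨q, -, rfl⟩
    exact integral_eval_eq_of_forall_integral_pow_eq h q
  have hS := closure_minimal hpoly hclosed
  rw [← Subalgebra.topologicalClosure_coe, polynomialFunctions_closure_eq_top] at hS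
  exact hS (Set.mem_univ f.toContinuousMap)

end Moments

theorem MeasureTheory.Measure.ext_of_forall_integral_pow_eq_of_ae_mem_Icc {a b : ℝ}
    {μ ν : Measure ℝ} [IsFiniteMeasure μ] [IsFiniteMeasure ν]
    (hμ : ∀ᵐ x ∂μ, x ∈ Set.Icc a b) (hν : ∀ᵐ x ∂ν, x ∈ Set.Icc a b)
    (h : ∀ n : ℕ, ∫ x, x ^ n ∂μ = ∫ x, x ^ n ∂ν) : μ = ν := by
  have hval := MeasurableEmbedding.subtype_coe (measurableSet_Icc (a := a) (b := b))
  have hmap (κ : Measure ℝ) (hκ : ∀ᵐ x ∂κ, x ∈ Set.Icc a b) :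
      (κ.comap (Subtype.val : Set.Icc a b → ℝ)).map Subtype.val = κ := by
    rw [map_comap_subtype_coe measurableSet_Icc, restrict_eq_self_of_ae_mem hκ]
  have hmoment (κ : Measure ℝ) (hκ : ∀ᵐ x ∂κ, x ∈ Set.Icc a b) (n : ℕ) :
      ∫ x : Set.Icc a b, (x : ℝ) ^ n ∂κ.comap Subtype.val = ∫ x, x ^ n ∂κ := by
    conv_rhs => rw [← hmap κ hκ]
    exact (hval.integral_map _).symm
  rw [← hmap μ hμ, ← hmap ν hν]
  congr 1
  exact ext_of_forall_integral_pow_eq_Icc fun n => by rw [hmoment μ hμ, hmoment ν hν, h]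

theorem ProbabilityTheory.iIndepFun.integral_prod_pow {Ω ι 𝕜 : Type*} [MeasurableSpace Ω]
    {μ : Measure Ω} [Fintype ι] [RCLike 𝕜] {X : ι → Ω → 𝕜} (hX : iIndepFun X μ)
    (hm : ∀ i, AEMeasurable (X i) μ) (n : ℕ) :
    ∫ ω, (∏ i, X i ω) ^ n ∂μ = ∏ i, ∫ ω, X i ω ^ n ∂μ := by
  simp_rw [← Finset.prod_pow]
  exact hX.integral_fun_prod_comp hm fun _ => (continuous_pow n).aestronglyMeasurable

theorem Finset.prod_range_div_of_ne_zero {G : Type*} [CommGroupWithZero G] (f : ℕ → G) (n : ℕ)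
    (hf : ∀ k ≤ n, f k ≠ 0) : ∏ k ∈ range n, f (k + 1) / f k = f n / f 0 := by
  induction n with
  | zero => simp [div_self (hf 0 le_rfl)]
  | succ n ih =>
    rw [prod_range_succ, ih fun k hk => hf k (hk.trans n.le_succ), mul_comm,
      div_mul_div_cancel₀ (hf n n.le_succ)]

theorem exists_nat_seq_of_chain {p : ℕ} (hp : 0 < p) {a b : Fin p → ℝ}
    (hchain : ∀ i : Fin p, ∀ h : i.val + 1 < p, a ⟨i.val + 1, h⟩ = a i + b i) :
    ∃ c : ℕ → ℝ, (∀ i : Fin p, c i = a i ∧ c (i + 1) = a i + b i) ∧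
      c p = a ⟨0, hp⟩ + ∑ i, b i := by
  let B : ℕ → ℝ := fun j => if h : j < p then b ⟨j, h⟩ else 0
  let c : ℕ → ℝ := fun k => a ⟨0, hp⟩ + ∑ j ∈ Finset.range k, B j
  have hsucc (i : Fin p) : c (i + 1) = c i + b i := by
    simp [c, B, Finset.sum_range_succ, add_assoc]
  have hc (i : Fin p) : c i = a i := by
    obtain ⟨k, hk⟩ := i
    induction k with
    | zero => simp [c]
    | succ k ih => rw [hsucc ⟨k, by omega⟩, ih (by omega), hchain ⟨k, by omega⟩ hk]
  refine ⟨c, fun i => ⟨hc i, by rw [hsucc, hc]⟩, ?_⟩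
  simp [c, B, ← Fin.sum_univ_eq_sum_range]

namespace ProbabilityTheory

variable {a b : ℝ}

theorem betaPDFReal_nonneg (ha : 0 < a) (hb : 0 < b) (x : ℝ) : 0 ≤ betaPDFReal a b x := by
  by_cases hx : 0 < x ∧ x < 1
  · exact (betaPDFReal_pos hx.1 hx.2 ha hb).le
  · simp [betaPDFReal, hx]

theorem measurable_betaPDF_s1 (a b : ℝ) : Measurable (betaPDF a b) :=
  (measurable_betaPDFReal a b).ennreal_ofReal

theorem integral_betaPDFReal (ha : 0 < a) (hb : 0 < b) : ∫ x, betaPDFReal a b x = 1 := by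
  rw [integral_eq_lintegral_of_nonneg_ae (ae_of_all _ (betaPDFReal_nonneg ha hb))
    (measurable_betaPDFReal a b).aestronglyMeasurable]
  exact congrArg ENNReal.toReal (lintegral_betaPDF_eq_one ha hb)

theorem pow_mul_betaPDFReal (ha : 0 < a) (hb : 0 < b) (n : ℕ) (x : ℝ) :
    x ^ n * betaPDFReal a b x = beta (a + n) b / beta a b * betaPDFReal (a + n) b x := by
  by_cases hx : 0 < x ∧ x < 1
  · have hB := (beta_pos (by positivity : 0 < a + n) hb).ne'
    rw [betaPDFReal, betaPDFReal, if_pos hx, if_pos hx, add_sub_right_comm,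
      rpow_add_natCast hx.1.ne']
    field_simp
  · simp [betaPDFReal, hx]

theorem integral_pow_betaMeasure (ha : 0 < a) (hb : 0 < b) (n : ℕ) :
    ∫ x, x ^ n ∂betaMeasure a b = beta (a + n) b / beta a b := by
  rw [betaMeasure, integral_withDensity_eq_integral_toReal_smul (measurable_betaPDF_s1 a b)
    (ae_of_all _ fun _ => ENNReal.ofReal_lt_top)]
  have h (x : ℝ) : (betaPDF a b x).toReal • x ^ n =
      beta (a + n) b / beta a b * betaPDFReal (a + n) b x := by
    rw [betaPDF, ENNReal.toReal_ofReal (betaPDFReal_nonneg ha hb x), smul_eq_mul, mul_comm,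
      pow_mul_betaPDFReal ha hb]
  simp_rw [h]
  rw [integral_const_mul, integral_betaPDFReal (by positivity) hb, mul_one]

theorem ae_mem_Ioo_betaMeasure : ∀ᵐ x ∂betaMeasure a b, x ∈ Set.Ioo 0 1 := by
  rw [betaMeasure, ae_withDensity_iff (measurable_betaPDF_s1 a b)]
  refine ae_of_all _ fun x hx => ⟨?_, ?_⟩
  · by_contra! h
    exact hx (betaPDF_eq_zero_of_nonpos h)
  · by_contra! h
    exact hx (betaPDF_eq_zero_of_one_le h)

theorem beta_add_div_beta (a t : ℝ) (hb : 0 < b) :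
    beta (a + t) b / beta a b = Gamma (a + b) / Gamma (a + b + t) / (Gamma a / Gamma (a + t)) := by
  have := (Gamma_pos_of_pos hb).ne'
  rw [beta, beta, add_right_comm a t b]
  field_simp

end ProbabilityTheory

theorem betaMeasure_eq_probabilityTheory_betaMeasure (a b : ℝ) :
    _root_.betaMeasure a b = ProbabilityTheory.betaMeasure a b := by
  rw [_root_.betaMeasure, ProbabilityTheory.betaMeasure]
  congr with x
  rw [betaPDF, _root_.betaPDFReal, ProbabilityTheory.betaPDFReal, beta, one_div_div]

namespace HasBetaLaw

variable {Ω : Type*} [MeasurableSpace Ω] {μ : Measure Ω} {X : Ω → ℝ} {a b : ℝ}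

theorem ae_mem_Ioo (h : HasBetaLaw μ X a b) : ∀ᵐ ω ∂μ, X ω ∈ Set.Ioo 0 1 := by
  refine ae_of_ae_map h.1.aemeasurable ?_
  rw [h.2, betaMeasure_eq_probabilityTheory_betaMeasure]
  exact ae_mem_Ioo_betaMeasure

theorem integral_pow (h : HasBetaLaw μ X a b) (ha : 0 < a) (hb : 0 < b) (n : ℕ) :
    ∫ ω, X ω ^ n ∂μ = beta (a + n) b / beta a b := by
  rw [← integral_map h.1.aemeasurable (continuous_pow n).aestronglyMeasurable, h.2,
    betaMeasure_eq_probabilityTheory_betaMeasure, integral_pow_betaMeasure ha hb]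

end HasBetaLaw

theorem integral_prod_pow_of_chain {Ω : Type*} [MeasurableSpace Ω] {μ : Measure Ω} {p : ℕ}
    (hp : 0 < p) {U : Fin p → Ω → ℝ} {a b : Fin p → ℝ} (ha : ∀ i, 0 < a i) (hb : ∀ i, 0 < b i)
    (hlaw : ∀ i, HasBetaLaw μ (U i) (a i) (b i)) (hind : iIndepFun U μ)
    (hchain : ∀ i : Fin p, ∀ h : i.val + 1 < p, a ⟨i.val + 1, h⟩ = a i + b i) (n : ℕ) :
    ∫ ω, (∏ i, U i ω) ^ n ∂μ = beta (a ⟨0, hp⟩ + n) (∑ i, b i) / beta (a ⟨0, hp⟩) (∑ i, b i) := by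
  have hS : 0 < ∑ i, b i := Finset.sum_pos (fun i _ => hb i) ⟨⟨0, hp⟩, Finset.mem_univ _⟩
  obtain ⟨c, hc, hcp⟩ := exists_nat_seq_of_chain hp hchain
  let g : ℝ → ℝ := fun t => Gamma t / Gamma (t + n)
  have hg (k : ℕ) (hk : k ≤ p) : g (c k) ≠ 0 := by
    have hck : 0 < c k := by
      rcases hk.lt_or_eq with hk | rfl
      · exact (hc ⟨k, hk⟩).1 ▸ ha _
      · exact hcp ▸ add_pos (ha _) hS
    exact (div_pos (Gamma_pos_of_pos hck) (Gamma_pos_of_pos (by positivity))).ne'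
  calc ∫ ω, (∏ i, U i ω) ^ n ∂μ
      = ∏ k ∈ Finset.range p, g (c (k + 1)) / g (c k) := by
        rw [hind.integral_prod_pow (fun i => (hlaw i).1.aemeasurable),
          ← Fin.prod_univ_eq_prod_range]
        refine Finset.prod_congr rfl fun i _ => ?_
        rw [(hlaw i).integral_pow (ha i) (hb i), beta_add_div_beta _ _ (hb i), (hc i).1,
          (hc i).2]
    _ = g (c p) / g (c 0) := Finset.prod_range_div_of_ne_zero _ p hg
    _ = _ := by
        rw [beta_add_div_beta _ _ hS, hcp, (hc ⟨0, hp⟩).1]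

theorem beta_product_rule_general {Ω : Type*} [MeasurableSpace Ω] (μ : Measure Ω)
    [IsProbabilityMeasure μ] (p : ℕ) (hp : 0 < p) (U : Fin p → Ω → ℝ) (a b : Fin p → ℝ)
    (ha : ∀ i, 0 < a i) (hb : ∀ i, 0 < b i)
    (hlaw : ∀ i, HasBetaLaw μ (U i) (a i) (b i))
    (hind : iIndepFun U μ)
    (hchain : ∀ i : Fin p, ∀ h : i.val + 1 < p, a ⟨i.val + 1, h⟩ = a i + b i) :
    HasBetaLaw μ (fun ω => ∏ i, U i ω) (a ⟨0, hp⟩) (∑ i, b i) := by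
  have hX : Measurable (fun ω => ∏ i, U i ω) := Finset.measurable_prod _ fun i _ => (hlaw i).1
  have hS : 0 < ∑ i, b i := Finset.sum_pos (fun i _ => hb i) ⟨⟨0, hp⟩, Finset.mem_univ _⟩
  have := isProbabilityMeasureBeta (ha ⟨0, hp⟩) hS
  have : IsProbabilityMeasure (μ.map fun ω => ∏ i, U i ω) :=
    Measure.isProbabilityMeasure_map hX.aemeasurable
  refine ⟨hX, ?_⟩
  rw [betaMeasure_eq_probabilityTheory_betaMeasure]
  refine Measure.ext_of_forall_integral_pow_eq_of_ae_mem_Icc (a := 0) (b := 1) ?_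
    (ae_mem_Ioo_betaMeasure.mono fun x hx => Set.Ioo_subset_Icc_self hx) fun n => ?_
  · refine (ae_map_iff hX.aemeasurable measurableSet_Icc).2 ?_
    filter_upwards [ae_all_iff.2 fun i => (hlaw i).ae_mem_Ioo] with ω hω
    exact ⟨Finset.prod_nonneg fun i _ => (hω i).1.le,
      Finset.prod_le_one (fun i _ => (hω i).1.le) fun i _ => (hω i).2.le⟩
  rw [integral_map hX.aemeasurable (continuous_pow n).aestronglyMeasurable,
    integral_prod_pow_of_chain hp ha hb hlaw hind hchain, integral_pow_betaMeasure (ha _) hS]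
end
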